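/- arXiv:2011.14993 — 2 statements merged into one kernel-verified Lean document; each statement's English description precedes it below -/
import Mathlib

section
/- For every natural number n ≥ 3, the broadcast domination number of the sunlet graph S_n equals ⌈(n+1)/2⌉. -/
open SimpleGraph Finset

/-- A dominating broadcast on `G`: every vertex is within distance `f u` of some
vertex `u` with `f u ≥ 1` (distances are measured by the graph metric `G.dist`). -/
def IsDominatingBroadcast {V : Type*} (G : SimpleGraph V) (f : V → ℕ) : Prop :=
  ∀ v : V, ∃ u : V, 1 ≤ f u ∧ G.dist u v ≤ f u

/-- The broadcast domination number of `G`: the minimum cost (sum of strengths)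
of a dominating broadcast on `G`. -/
noncomputable def gammaB (V : Type*) [Fintype V] (G : SimpleGraph V) : ℕ :=
  sInf {c : ℕ | ∃ f : V → ℕ, IsDominatingBroadcast G f ∧ ∑ v, f v = c}

/-- The sunlet graph `S_n`: the cycle `C_n` together with one pendant vertex
attached to each cycle vertex.  The vertex `(i, false)` is the `i`-th cycle
vertex and `(i, true)` is the pendant vertex attached to it. -/
def sunlet (n : ℕ) : SimpleGraph (Fin n × Bool) :=
  SimpleGraph.fromRel (fun a b =>
    (a.2 = false ∧ b.2 = false ∧ (SimpleGraph.cycleGraph n).Adj a.1 b.1) ∨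
    (a.1 = b.1 ∧ a.2 = false ∧ b.2 = true))

/-!
Broadcasting with strength `⌊n/2⌋ + 1` from a single cycle vertex dominates `S_n`, since every
vertex lies within that distance of it. Conversely, a vertex `u` broadcasting with strength
`f u ≥ 1` reaches the pendant at `j` only if the cyclic distance from `u` to `j` is at most
`f u - 1`, so it dominates at most `2 f u - 1` pendants. Covering all `n` pendants forces
`n ≤ ∑ (2 f u - 1) ≤ 2 ∑ f - 1`.
-/

namespace SimpleGraph

variable {V : Type*} {G : SimpleGraph V} {φ : V → ℕ}

theorem Walk.le_add_length_of_adj {u v : V} (hφ : ∀ ⦃x y⦄, G.Adj x y → φ x ≤ φ y + 1)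
    (p : G.Walk u v) : φ u ≤ φ v + p.length := by
  induction p with
  | nil => simp
  | cons h _ ih => rw [Walk.length_cons]; have := hφ h; omega

theorem Reachable.dist_map_le {V' : Type*} {G' : SimpleGraph V'} (f : G →g G') {u v : V}
    (h : G.Reachable u v) : G'.dist (f u) (f v) ≤ G.dist u v := by
  obtain ⟨p, hp⟩ := h.exists_walk_length_eq_dist
  exact hp ▸ p.length_map f ▸ dist_le (p.map f)

theorem Reachable.le_add_dist_of_adj {u v : V} (hφ : ∀ ⦃x y⦄, G.Adj x y → φ x ≤ φ y + 1)
    (h : G.Reachable u v) : φ u ≤ φ v + G.dist u v := by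
  obtain ⟨p, hp⟩ := h.exists_walk_length_eq_dist
  exact hp ▸ p.le_add_length_of_adj hφ

end SimpleGraph

section Broadcast

variable {V : Type*} {G : SimpleGraph V}

theorem IsDominatingBroadcast.card_le_sum [Fintype V] {f : V → ℕ}
    (hf : IsDominatingBroadcast G f) {ι : Type*} [DecidableEq ι] (s : Finset ι) (p : ι → V) :
    #s ≤ ∑ u with 1 ≤ f u, #{i ∈ s | G.dist u (p i) ≤ f u} := by
  refine (card_le_card fun i hi => ?_).trans card_biUnion_le
  obtain ⟨u, hu, hdist⟩ := hf (p i)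
  exact mem_biUnion.2 ⟨u, mem_filter.2 ⟨mem_univ u, hu⟩, mem_filter.2 ⟨hi, hdist⟩⟩

theorem isDominatingBroadcast_single [DecidableEq V] {c : V} {r : ℕ} (hr : 1 ≤ r)
    (h : ∀ v, G.dist c v ≤ r) : IsDominatingBroadcast G (Pi.single c r) :=
  fun v => ⟨c, by simpa using hr, by simpa using h v⟩

theorem gammaB_le [Fintype V] {f : V → ℕ} (hf : IsDominatingBroadcast G f) :
    gammaB V G ≤ ∑ v, f v :=
  Nat.sInf_le ⟨f, hf, rfl⟩

theorem le_gammaB [Fintype V] {m : ℕ} {f₀ : V → ℕ} (hf₀ : IsDominatingBroadcast G f₀)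
    (h : ∀ f, IsDominatingBroadcast G f → m ≤ ∑ v, f v) : m ≤ gammaB V G :=
  le_csInf ⟨_, f₀, hf₀, rfl⟩ fun _ ⟨f, hf, hsum⟩ => hsum ▸ h f hf

end Broadcast

theorem Nat.ceil_natCast_add_one_div_two {K : Type*} [Field K] [LinearOrder K]
    [IsStrictOrderedRing K] [FloorSemiring K] (n : ℕ) :
    ⌈((n : K) + 1) / 2⌉₊ = n / 2 + 1 := by
  rw [Nat.ceil_eq_iff (by omega), Nat.add_sub_cancel]
  have h₁ : 2 * ((n / 2 : ℕ) : K) ≤ n := by exact_mod_cast Nat.mul_div_le n 2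
  have h₂ : (n : K) ≤ 2 * ((n / 2 : ℕ) : K) + 1 := by
    exact_mod_cast (by omega : n ≤ 2 * (n / 2) + 1)
  rw [lt_div_iff₀ two_pos, div_le_iff₀ two_pos]
  push_cast
  constructor <;> linarith

namespace Fin

variable {n : ℕ} [NeZero n]

open Fin.CommRing

-- The distance from `a` to `b` along the cycle: the least absolute residue of `b - a` mod `n`.
def cycDist (a b : Fin n) : ℕ := (ZMod.finEquiv n (b - a)).valMinAbs.natAbs

@[simp] theorem cycDist_self (a : Fin n) : cycDist a a = 0 := by
  simp [cycDist]

theorem cycDist_triangle (a b c : Fin n) : cycDist a c ≤ cycDist a b + cycDist b c := by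
  have := ZMod.natAbs_valMinAbs_add_le (ZMod.finEquiv n (c - b)) (ZMod.finEquiv n (b - a))
  rw [← map_add, sub_add_sub_cancel] at this
  unfold cycDist
  omega

theorem cycDist_le_one_of_adj {a b : Fin n} (h : (cycleGraph n).Adj a b) : cycDist a b ≤ 1 := by
  have val_eq_one : ∀ x : Fin n, x.val = 1 → (ZMod.finEquiv n x).valMinAbs.natAbs ≤ 1 := by
    intro x hx
    have hn : 1 < n := hx ▸ x.isLt
    have hx1 : x = ((1 : ℕ) : Fin n) := Fin.ext (by simp [hx, Nat.mod_eq_of_lt hn])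
    rw [hx1, map_natCast, ZMod.valMinAbs_natCast_of_le_half (by omega)]
    rfl
  rcases cycleGraph_adj'.1 h with h | h
  · rw [cycDist, ← neg_sub, map_neg, ZMod.natAbs_valMinAbs_neg]
    exact val_eq_one _ h
  · exact val_eq_one _ h

theorem card_cycDist_le (a : Fin n) (r : ℕ) : #{b | cycDist a b ≤ r} ≤ 2 * r + 1 := by
  have h := card_le_card_of_injOn (fun b => (ZMod.finEquiv n (b - a)).valMinAbs)
    (s := {b | cycDist a b ≤ r}) (t := Icc (-r : ℤ) r) ?_ ?_
  · simp only [Int.card_Icc] at h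
    omega
  · intro b hb
    simp only [cycDist, map_sub, coe_filter, mem_univ, true_and, Set.mem_ofPred_eq, coe_Icc,
      Set.mem_Icc] at hb ⊢
    omega
  · intro b _ c _ hbc
    simpa using ZMod.valMinAbs_inj.1 hbc

end Fin

section CycleGraph

variable {n : ℕ}

open Fin.NatCast Fin.CommRing

theorem cycleGraph_exists_walk_add_natCast [NeZero n] (hn : 1 < n) (i : Fin n) (k : ℕ) :
    ∃ p : (cycleGraph n).Walk i (i + k), p.length = k := by
  induction k generalizing i with
  | zero => exact ⟨Walk.nil.copy rfl (by simp), by simp⟩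
  | succ k ih =>
    have hadj : (cycleGraph n).Adj i (i + 1) := cycleGraph_adj'.2 <| Or.inr <| by
      rw [add_sub_cancel_left, Fin.val_one', Nat.mod_eq_of_lt hn]
    obtain ⟨p, hp⟩ := ih (i + 1)
    exact ⟨(Walk.cons hadj p).copy rfl (by push_cast; ring), by simp [hp]⟩

theorem cycleGraph_dist_le_half (hn : 1 < n) (a b : Fin n) : (cycleGraph n).dist a b ≤ n / 2 := by
  have : NeZero n := ⟨by omega⟩
  by_cases h : (b - a).val ≤ n / 2
  · obtain ⟨p, hp⟩ := cycleGraph_exists_walk_add_natCast hn a (b - a).val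
    have hb : a + ((b - a).val : Fin n) = b := by rw [Fin.cast_val_eq_self]; ring
    exact (dist_le (p.copy rfl hb)).trans (by simpa [hp])
  · obtain ⟨p, hp⟩ := cycleGraph_exists_walk_add_natCast hn b (n - (b - a).val)
    have ha : b + ((n - (b - a).val : ℕ) : Fin n) = a := by
      rw [Nat.cast_sub (b - a).isLt.le, Fin.natCast_self, Fin.cast_val_eq_self]; ring
    rw [dist_comm]
    exact (dist_le (p.copy rfl ha)).trans (by simp only [Walk.length_copy, hp]; omega)

end CycleGraph

section Sunlet

variable {n : ℕ}

theorem sunlet_adj {a b : Fin n} {s t : Bool} :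
    (sunlet n).Adj (a, s) (b, t) ↔
      (s = false ∧ t = false ∧ (cycleGraph n).Adj a b) ∨ (a = b ∧ s ≠ t) := by
  cases s <;> cases t <;> simp [sunlet, adj_comm, @eq_comm _ b a]
  exact Adj.ne

def cycleToSunlet (n : ℕ) : cycleGraph n →g sunlet n where
  toFun i := (i, false)
  map_rel' h := sunlet_adj.2 (Or.inl ⟨rfl, rfl, h⟩)

theorem sunlet_adj_pendant (i : Fin n) : (sunlet n).Adj (i, false) (i, true) :=
  sunlet_adj.2 (Or.inr ⟨rfl, by simp⟩)

theorem sunlet_preconnected : (sunlet n).Preconnected := by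
  have toRim : ∀ v : Fin n × Bool, (sunlet n).Reachable v (v.1, false) := by
    rintro ⟨i, _ | _⟩
    · rfl
    · exact (sunlet_adj_pendant i).symm.reachable
  intro u v
  exact (toRim u).trans <|
    ((cycleGraph_preconnected u.1 v.1).map (cycleToSunlet n)).trans (toRim v).symm

theorem sunlet_dist_le (hn : 1 < n) (c : Fin n) (v : Fin n × Bool) :
    (sunlet n).dist (c, false) v ≤ n / 2 + 1 := by
  obtain ⟨j, s⟩ := v
  have hrim : (sunlet n).dist (c, false) (j, false) ≤ n / 2 :=
    ((cycleGraph_preconnected c j).dist_map_le (cycleToSunlet n)).trans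
      (cycleGraph_dist_le_half hn c j)
  cases s with
  | false => omega
  | true =>
    have hpendant := (sunlet_adj_pendant j).reachable.dist_triangle_right (c, false)
    rw [dist_eq_one_iff_adj.2 (sunlet_adj_pendant j)] at hpendant
    omega

theorem cycDist_lt_dist_pendant [NeZero n] {u : Fin n × Bool} {j : Fin n} (hu : u ≠ (j, true)) :
    Fin.cycDist u.1 j < (sunlet n).dist u (j, true) := by
  -- `φ` agrees with the distance to `(j, true)` except at the other pendants, where it is smaller.
  let φ : Fin n × Bool → ℕ := fun x => if x = (j, true) then 0 else Fin.cycDist x.1 j + 1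
  have hφ : ∀ ⦃x y⦄, (sunlet n).Adj x y → φ x ≤ φ y + 1 := by
    rintro ⟨a, s⟩ ⟨b, t⟩ h
    rcases sunlet_adj.1 h with ⟨rfl, rfl, hab⟩ | ⟨rfl, hst⟩
    · have := Fin.cycDist_triangle a b j
      have := Fin.cycDist_le_one_of_adj hab
      simp only [φ, Prod.mk.injEq, Bool.false_eq_true, and_false, if_false]
      omega
    · by_cases h : (a, t) = (j, true)
      · obtain ⟨rfl, rfl⟩ := Prod.mk.inj h
        simp [φ, hst]
      · simp only [φ, h, if_false]
        split_ifs <;> omega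
  have := (sunlet_preconnected u (j, true)).le_add_dist_of_adj hφ
  simp only [φ, hu, if_false, if_true] at this
  omega

theorem card_pendant_dist_le [NeZero n] (u : Fin n × Bool) (r : ℕ) :
    #{j | (sunlet n).dist u (j, true) ≤ r + 1} ≤ 2 * r + 1 := by
  refine le_trans (card_le_card fun j hj => ?_) (Fin.card_cycDist_le u.1 r)
  rw [mem_filter] at hj ⊢
  refine ⟨mem_univ j, ?_⟩
  by_cases hu : u = (j, true)
  · simp [hu]
  · have := cycDist_lt_dist_pendant hu
    omega

theorem IsDominatingBroadcast.succ_le_two_mul_sum_sunlet [NeZero n] {f : Fin n × Bool → ℕ}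
    (hf : IsDominatingBroadcast (sunlet n) f) : n + 1 ≤ 2 * ∑ v, f v := by
  set S : Finset (Fin n × Bool) := {u | 1 ≤ f u}
  have hcover : n ≤ ∑ u ∈ S, #{j | (sunlet n).dist u (j, true) ≤ f u} := by
    simpa using hf.card_le_sum univ (·, true)
  have hball : ∀ u ∈ S, #{j | (sunlet n).dist u (j, true) ≤ f u} + 1 ≤ 2 * f u := by
    intro u hu
    have hfu : f u - 1 + 1 = f u := Nat.sub_add_cancel (mem_filter.1 hu).2
    have := card_pendant_dist_le u (f u - 1)
    rw [hfu] at this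
    omega
  have hS : 1 ≤ #S := by
    obtain ⟨u, hu, -⟩ := hf (0, true)
    exact card_pos.2 ⟨u, mem_filter.2 ⟨mem_univ u, hu⟩⟩
  calc n + 1 ≤ ∑ u ∈ S, #{j | (sunlet n).dist u (j, true) ≤ f u} + #S := by omega
    _ = ∑ u ∈ S, (#{j | (sunlet n).dist u (j, true) ≤ f u} + 1) := by
      rw [sum_add_distrib, card_eq_sum_ones]
    _ ≤ ∑ u ∈ S, 2 * f u := sum_le_sum hball
    _ ≤ ∑ u, 2 * f u := sum_le_sum_of_subset (subset_univ S)
    _ = 2 * ∑ u, f u := (mul_sum ..).symm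

end Sunlet

/-- For every natural number `n ≥ 3`, the broadcast domination number of the
sunlet graph `S_n` equals `⌈(n + 1) / 2⌉`. -/
theorem gammaB_sunlet (n : ℕ) (hn : 3 ≤ n) :
    gammaB (Fin n × Bool) (sunlet n) = ⌈((n : ℚ) + 1) / 2⌉₊ := by
  have : NeZero n := ⟨by omega⟩
  have hcenter : IsDominatingBroadcast (sunlet n) (Pi.single (0, false) (n / 2 + 1)) :=
    isDominatingBroadcast_single (by omega) (sunlet_dist_le (by omega) 0)
  rw [Nat.ceil_natCast_add_one_div_two]
  refine le_antisymm ((gammaB_le hcenter).trans (by simp)) (le_gammaB hcenter fun f hf => ?_)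
  have := hf.succ_le_two_mul_sum_sunlet
  omega
end

section
/- For all natural numbers n ≥ 1 and m ≥ 3, in the sunlet graph with degree n, S_m^n, every base vertex has eccentricity exactly ⌊m/2⌋ + n, and every pendant (non-base) vertex has eccentricity strictly greater than the eccentricity of the base vertex of its branch. -/
open SimpleGraph Finset

/-- The sunlet graph with degree `n` on the cycle `C_m`, `S_m^n`: a path on `n`
new vertices (a branch) is attached to each vertex of the cycle `C_m`.
The vertex `(i, 0)` is the `i`-th base vertex (on the cycle) and, for
`1 ≤ j ≤ n`, the vertex `(i, j)` is the `j`-th pendant vertex of the branch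
attached at `(i, 0)`. -/
def sunletDeg (m n : ℕ) : SimpleGraph (Fin m × Fin (n + 1)) :=
  SimpleGraph.fromRel (fun a b =>
    (a.2 = 0 ∧ b.2 = 0 ∧ (SimpleGraph.cycleGraph m).Adj a.1 b.1) ∨
    (a.1 = b.1 ∧ (a.2 : ℕ) + 1 = (b.2 : ℕ)))

/-- The eccentricity of a vertex: the maximum distance from `v` to any vertex. -/
noncomputable def eccentricity {V : Type*} [Fintype V] (G : SimpleGraph V) (v : V) : ℕ :=
  Finset.univ.sup fun u => G.dist u v

/-- The radius of a graph: the minimum eccentricity over all vertices. -/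
noncomputable def graphRadius (V : Type*) [Fintype V] (G : SimpleGraph V) : ℕ :=
  sInf {e : ℕ | ∃ v : V, eccentricity G v = e}

/-!
A vertex `(a, j)` reaches the base vertex `(i, 0)` by walking down its branch and then along the
shorter arc of the cycle, in at most `j + ⌊m/2⌋` steps. Conversely, let `p` be antipodal to `a`.
The potential `v ↦ cyclicDist v.1 p ± v.2`, with the sign negative exactly on the branch at `p`,
changes by at most one along every edge. It equals `-n` at
the tip of the branch at `p` and `⌊m/2⌋ + j` at `(a, j)`, so `e(a, j) ≥ ⌊m/2⌋ + n + j`.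
-/

namespace SimpleGraph

variable {V : Type*} {G : SimpleGraph V}

theorem exists_walk_length_eq_of_adj_succ {f : ℕ → V} {t : ℕ}
    (hf : ∀ k < t, G.Adj (f k) (f (k + 1))) : ∃ w : G.Walk (f 0) (f t), w.length = t := by
  induction t with
  | zero => exact ⟨.nil, rfl⟩
  | succ t ih =>
    obtain ⟨w, hw⟩ := ih fun k hk => hf k (by omega)
    exact ⟨w.concat (hf t t.lt_succ_self), by simp [hw]⟩

theorem Walk.abs_sub_le_length {φ : V → ℤ} (hφ : ∀ ⦃a b⦄, G.Adj a b → |φ a - φ b| ≤ 1)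
    {u v : V} (w : G.Walk u v) : |φ u - φ v| ≤ w.length := by
  induction w with
  | nil => simp
  | @cons u x v h p ih =>
    calc |φ u - φ v| ≤ |φ u - φ x| + |φ x - φ v| := abs_sub_le _ _ _
      _ ≤ 1 + p.length := add_le_add (hφ h) ih
      _ = (Walk.cons h p).length := by push_cast [Walk.length_cons]; ring

theorem Reachable.abs_sub_le_dist {φ : V → ℤ} (hφ : ∀ ⦃a b⦄, G.Adj a b → |φ a - φ b| ≤ 1)
    {u v : V} (h : G.Reachable u v) : |φ u - φ v| ≤ G.dist u v := by
  obtain ⟨w, hw⟩ := h.exists_walk_length_eq_dist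
  exact hw ▸ w.abs_sub_le_length hφ

end SimpleGraph

theorem dist_le_eccentricity {V : Type*} [Fintype V] (G : SimpleGraph V) (u v : V) :
    G.dist u v ≤ eccentricity G v :=
  Finset.le_sup (f := fun u => G.dist u v) (Finset.mem_univ u)

theorem eccentricity_le_iff {V : Type*} [Fintype V] {G : SimpleGraph V} {v : V} {k : ℕ} :
    eccentricity G v ≤ k ↔ ∀ u, G.dist u v ≤ k := by
  simp [eccentricity]

namespace Fin

variable {m : ℕ}

theorem val_sub_eq_ite (a b : Fin m) :
    (a - b).val = if b.val ≤ a.val then a.val - b.val else m + a.val - b.val := by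
  split_ifs with h
  exacts [sub_val_of_le h, coe_sub_iff_lt.mpr (by omega)]

def cyclicDist (a b : Fin m) : ℕ := min (a - b).val (b - a).val

@[simp]
theorem cyclicDist_self (a : Fin m) : cyclicDist a a = 0 := by
  simp [cyclicDist, val_sub_eq_ite]

theorem cyclicDist_le_half (a b : Fin m) : cyclicDist a b ≤ m / 2 := by
  simp only [cyclicDist, val_sub_eq_ite]
  split_ifs <;> omega

theorem cyclicDist_le_cyclicDist_add_one {a b : Fin m} (h : (cycleGraph m).Adj a b) (c : Fin m) :
    cyclicDist a c ≤ cyclicDist b c + 1 := by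
  rw [cycleGraph_adj'] at h
  simp only [cyclicDist, val_sub_eq_ite] at h ⊢
  split_ifs at h ⊢ <;> omega

theorem exists_cyclicDist_eq_half (a : Fin m) : ∃ b, cyclicDist a b = m / 2 := by
  by_cases h : a.val + m / 2 < m
  · refine ⟨⟨a.val + m / 2, h⟩, ?_⟩
    simp only [cyclicDist, val_sub_eq_ite]
    split_ifs <;> omega
  · refine ⟨⟨a.val + m / 2 - m, by omega⟩, ?_⟩
    simp only [cyclicDist, val_sub_eq_ite]
    split_ifs <;> omega

end Fin

section Sunlet

variable {m n : ℕ}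

theorem sunletDeg_adj_base {a b : Fin m} (h : (cycleGraph m).Adj a b) :
    (sunletDeg m n).Adj (a, 0) (b, 0) :=
  (fromRel_adj _ _ _).mpr ⟨fun he => h.ne (Prod.ext_iff.mp he).1, .inl (.inl ⟨rfl, rfl, h⟩)⟩

theorem sunletDeg_adj_branch (a : Fin m) {j k : Fin (n + 1)} (h : j.val + 1 = k.val) :
    (sunletDeg m n).Adj (a, j) (a, k) :=
  (fromRel_adj _ _ _).mpr ⟨fun he => by simp_all [Fin.ext_iff], .inl (.inr ⟨rfl, h⟩)⟩

theorem sunletDeg_exists_walk_branch (a : Fin m) (j : Fin (n + 1)) :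
    ∃ w : (sunletDeg m n).Walk (a, 0) (a, j), w.length = j := by
  obtain ⟨w, hw⟩ := exists_walk_length_eq_of_adj_succ (G := sunletDeg m n)
    (f := fun k => (a, ⟨min k n, by omega⟩)) (t := j) fun k hk =>
      sunletDeg_adj_branch a (by simp only; omega)
  exact ⟨w.copy (by simp) (by simp [j.is_le]), by simpa⟩

open Fin.NatCast in
theorem sunletDeg_exists_walk_base (hm : 2 ≤ m) (a b : Fin m) :
    ∃ w : (sunletDeg m n).Walk (a, 0) (b, 0), w.length = Fin.cyclicDist a b := by
  have : NeZero m := ⟨by omega⟩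
  have forward (a b : Fin m) :
      ∃ w : (sunletDeg m n).Walk (a, 0) (b, 0), w.length = (b - a).val := by
    obtain ⟨w, hw⟩ := exists_walk_length_eq_of_adj_succ (G := sunletDeg m n)
      (f := fun k => (a + (k : Fin m), 0)) (t := (b - a).val) fun k _ => by
        refine sunletDeg_adj_base (cycleGraph_adj'.mpr (.inr ?_))
        simp [Nat.mod_eq_of_lt (show 1 < m by omega)]
    exact ⟨w.copy (by simp) (by simp), by simpa⟩
  rcases min_choice (a - b).val (b - a).val with h | h
  · obtain ⟨w, hw⟩ := forward b a
    exact ⟨w.reverse, by simp [Fin.cyclicDist, h, hw]⟩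
  · obtain ⟨w, hw⟩ := forward a b
    exact ⟨w, by simp [Fin.cyclicDist, h, hw]⟩

theorem sunletDeg_connected (hm : 2 ≤ m) : (sunletDeg m n).Connected := by
  let a₀ : Fin m := ⟨0, by omega⟩
  refine (connected_iff_exists_forall_reachable _).mpr ⟨(a₀, 0), fun ⟨a, j⟩ => ?_⟩
  obtain ⟨w₁, -⟩ := sunletDeg_exists_walk_base (n := n) hm a₀ a
  obtain ⟨w₂, -⟩ := sunletDeg_exists_walk_branch a j
  exact ⟨w₁.append w₂⟩

theorem sunletDeg_dist_le (hm : 2 ≤ m) (a b : Fin m) (j : Fin (n + 1)) :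
    (sunletDeg m n).dist (a, j) (b, 0) ≤ m / 2 + j := by
  obtain ⟨w₁, hw₁⟩ := sunletDeg_exists_walk_branch a j
  obtain ⟨w₂, hw₂⟩ := sunletDeg_exists_walk_base (n := n) hm a b
  calc _ ≤ (w₁.reverse.append w₂).length := dist_le _
    _ = Fin.cyclicDist a b + j := by simp [hw₁, hw₂, add_comm]
    _ ≤ m / 2 + j := by grw [Fin.cyclicDist_le_half]

def sunletPotential (p : Fin m) (v : Fin m × Fin (n + 1)) : ℤ :=
  Fin.cyclicDist v.1 p + if v.1 = p then -(v.2 : ℤ) else v.2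

theorem abs_sunletPotential_sub_le_one (p : Fin m) {u v : Fin m × Fin (n + 1)}
    (h : (sunletDeg m n).Adj u v) : |sunletPotential p u - sunletPotential p v| ≤ 1 := by
  suffices key : ∀ u v : Fin m × Fin (n + 1), (u.2 = 0 ∧ v.2 = 0 ∧ (cycleGraph m).Adj u.1 v.1) ∨
      (u.1 = v.1 ∧ u.2.val + 1 = v.2) → |sunletPotential p u - sunletPotential p v| ≤ 1 by
    rcases ((fromRel_adj _ _ _).mp h).2 with huv | hvu
    exacts [key u v huv, abs_sub_comm (sunletPotential p u) _ ▸ key v u hvu]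
  rintro ⟨a, j⟩ ⟨b, k⟩ h
  dsimp only at h
  rcases h with ⟨rfl, rfl, hab⟩ | ⟨rfl, hjk⟩
  · have h₁ := Fin.cyclicDist_le_cyclicDist_add_one hab p
    have h₂ := Fin.cyclicDist_le_cyclicDist_add_one hab.symm p
    simp only [sunletPotential, Fin.val_zero, Nat.cast_zero, neg_zero, ite_self, add_zero, abs_le]
    omega
  · simp only [sunletPotential, abs_le]
    split_ifs <;> omega

theorem sunletDeg_le_eccentricity (hm : 2 ≤ m) (a : Fin m) (j : Fin (n + 1)) :
    m / 2 + n + j ≤ eccentricity (sunletDeg m n) (a, j) := by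
  obtain ⟨p, hp⟩ := Fin.exists_cyclicDist_eq_half a
  have hap : a ≠ p := by
    rintro rfl
    rw [Fin.cyclicDist_self] at hp
    omega
  have key := ((sunletDeg_connected hm).preconnected (p, Fin.last n) (a, j)).abs_sub_le_dist
    fun _ _ => abs_sunletPotential_sub_le_one p
  have tip : sunletPotential p (p, Fin.last n) = -n := by simp [sunletPotential]
  have base : sunletPotential p (a, j) = (m / 2 : ℕ) + j := by simp [sunletPotential, hap, hp]
  rw [tip, base, abs_le] at key
  have := dist_le_eccentricity (sunletDeg m n) (p, Fin.last n) (a, j)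
  omega

end Sunlet

theorem sunletDeg_eccentricity_general (m n : ℕ) (hm : 3 ≤ m) :
    (∀ i : Fin m, eccentricity (sunletDeg m n) (i, (0 : Fin (n + 1))) = m / 2 + n) ∧
    (∀ (i : Fin m) (j : Fin (n + 1)), j ≠ 0 →
      eccentricity (sunletDeg m n) (i, (0 : Fin (n + 1))) <
        eccentricity (sunletDeg m n) (i, j)) := by
  have hm₂ : 2 ≤ m := by omega
  have base (i : Fin m) : eccentricity (sunletDeg m n) (i, 0) = m / 2 + n := by
    refine le_antisymm (eccentricity_le_iff.mpr fun ⟨a, j⟩ => ?_) ?_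
    · grw [sunletDeg_dist_le hm₂, j.is_le]
    · simpa using sunletDeg_le_eccentricity (n := n) hm₂ i 0
  refine ⟨base, fun i j hj => ?_⟩
  have := sunletDeg_le_eccentricity hm₂ i j
  have := Fin.pos_iff_ne_zero.mpr hj
  rw [base]
  omega

/-- In `S_m^n` (`n ≥ 1`, `m ≥ 3`), every base vertex has eccentricity exactly
`⌊m/2⌋ + n`, and every pendant (non-base) vertex has eccentricity strictly
greater than the eccentricity of the base vertex of its branch. -/
theorem sunletDeg_eccentricity (m n : ℕ) (hm : 3 ≤ m) (hn : 1 ≤ n) :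
    (∀ i : Fin m, eccentricity (sunletDeg m n) (i, (0 : Fin (n + 1))) = m / 2 + n) ∧
    (∀ (i : Fin m) (j : Fin (n + 1)), j ≠ 0 →
      eccentricity (sunletDeg m n) (i, (0 : Fin (n + 1))) <
        eccentricity (sunletDeg m n) (i, j)) :=
  sunletDeg_eccentricity_general m n hm
end
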